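/- arXiv:2003.09201 — 2 statements merged into one kernel-verified Lean document; each statement's English description precedes it below -/
import Mathlib

section
/- For a log-Hölder continuous exponent q(·) ∈ 𝒞^{log}(ℝⁿ) ∩ 𝒫(ℝⁿ), the norm of the characteristic function of a cube satisfies ‖χ_Q‖_{L^{q(·)}} ≈ |Q|^{1/q(x)} for every cube Q with |Q| ≤ 2ⁿ and every x ∈ Q, and ‖χ_Q‖_{L^{q(·)}} ≈ |Q|^{1/q_∞} for every cube Q with |Q| ≥ 1, where q_∞ = lim_{|x|→∞} q(x). -/
open MeasureTheory ENNReal Set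

/-- Axis-parallel cubes in `ℝⁿ`. -/
def IsCube {n : ℕ} (Q : Set (Fin n → ℝ)) : Prop :=
  ∃ (c : Fin n → ℝ) (r : ℝ), 0 < r ∧ Q = Set.univ.pi fun i => Set.Icc (c i) (c i + r)

/-- The Luxemburg norm on the variable exponent Lebesgue space. -/
noncomputable def luxNorm {n : ℕ} (q : (Fin n → ℝ) → ℝ) (f : (Fin n → ℝ) → ℝ) : ℝ :=
  sInf {η : ℝ | 0 < η ∧
    ∫⁻ x, ENNReal.ofReal ((|f x| / η) ^ q x) ∂(volume : Measure (Fin n → ℝ)) ≤ 1}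

lemma modular_eq {n : ℕ} (q : (Fin n → ℝ) → ℝ) (hq : ∀ x, 0 < q x)
    (Q : Set (Fin n → ℝ)) (hQ : MeasurableSet Q) (η : ℝ) :
    ∫⁻ x, ENNReal.ofReal ((|Q.indicator (fun _ => (1:ℝ)) x| / η) ^ q x) ∂volume
      = ∫⁻ x in Q, ENNReal.ofReal ((1 / η) ^ q x) ∂volume := by
  rw [← lintegral_indicator hQ]
  congr 1; funext x
  by_cases hx : x ∈ Q
  · simp [hx]
  · simp [hx, Real.zero_rpow (hq x).ne']

lemma lux_bounds {n : ℕ} (q : (Fin n → ℝ) → ℝ) (qm : ℝ) (hqm : 0 < qm)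
    (hb : ∀ x, qm ≤ q x) (Q : Set (Fin n → ℝ)) (hQ : MeasurableSet Q)
    (θ θ' : ℝ) (hθ : 0 < θ) (hθ' : 0 < θ')
    (h1 : 1 ≤ ∫⁻ x in Q, ENNReal.ofReal ((1 / θ) ^ q x) ∂volume)
    (h2 : ∫⁻ x in Q, ENNReal.ofReal ((1 / θ') ^ q x) ∂volume ≤ 1) :
    θ ≤ luxNorm q (Q.indicator fun _ => (1:ℝ)) ∧
      luxNorm q (Q.indicator fun _ => (1:ℝ)) ≤ θ' := by
  have hq : ∀ x, 0 < q x := fun x => hqm.trans_le (hb x)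
  have hmem : θ' ∈ {η : ℝ | 0 < η ∧
      ∫⁻ x, ENNReal.ofReal ((|Q.indicator (fun _ => (1:ℝ)) x| / η) ^ q x) ∂volume ≤ 1} := by
    refine ⟨hθ', ?_⟩
    rw [modular_eq q hq Q hQ]; exact h2
  constructor
  · apply le_csInf ⟨θ', hmem⟩
    rintro b ⟨hb0, hbint⟩
    rw [modular_eq q hq Q hQ] at hbint
    by_contra hlt
    push_neg at hlt
    have hr1 : (1:ℝ) < θ / b := (one_lt_div hb0).2 hlt
    have hc1 : (1:ℝ≥0∞) < ENNReal.ofReal ((θ / b) ^ qm) :=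
      ENNReal.one_lt_ofReal.2 (Real.one_lt_rpow_iff_of_pos (by positivity) |>.2 (Or.inl ⟨hr1, hqm⟩))
    have key : ∀ x, ENNReal.ofReal ((θ / b) ^ qm) * ENNReal.ofReal ((1 / θ) ^ q x)
        ≤ ENNReal.ofReal ((1 / b) ^ q x) := by
      intro x
      rw [← ENNReal.ofReal_mul (by positivity)]
      apply ENNReal.ofReal_le_ofReal
      have e1 : (θ / b) ^ qm ≤ (θ / b) ^ q x :=
        Real.rpow_le_rpow_of_exponent_le hr1.le (hb x)
      have e2 : (θ / b) ^ q x * (1 / θ) ^ q x = (1 / b) ^ q x := by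
        rw [← Real.mul_rpow (by positivity) (by positivity)]
        congr 1; field_simp
      calc (θ / b) ^ qm * (1 / θ) ^ q x ≤ (θ / b) ^ q x * (1 / θ) ^ q x := by
            apply mul_le_mul_of_nonneg_right e1 (by positivity)
        _ = (1 / b) ^ q x := e2
    have chain : ENNReal.ofReal ((θ / b) ^ qm) * 1 ≤ 1 := by
      calc ENNReal.ofReal ((θ / b) ^ qm) * 1
          ≤ ENNReal.ofReal ((θ / b) ^ qm) * ∫⁻ x in Q, ENNReal.ofReal ((1 / θ) ^ q x) ∂volume :=
            mul_le_mul_right h1 _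
        _ ≤ ∫⁻ x in Q, ENNReal.ofReal ((θ / b) ^ qm) * ENNReal.ofReal ((1 / θ) ^ q x) ∂volume :=
            lintegral_const_mul_le _ _
        _ ≤ ∫⁻ x in Q, ENNReal.ofReal ((1 / b) ^ q x) ∂volume := lintegral_mono fun x => key x
        _ ≤ 1 := hbint
    rw [mul_one] at chain
    exact absurd chain (not_le.2 hc1)
  · exact csInf_le ⟨0, fun b hb => hb.1.le⟩ hmem

lemma rpow_bounds (V e b : ℝ) (hV : 0 < V) (h : |Real.log V * e| ≤ b) :
    Real.exp (-b) ≤ V ^ e ∧ V ^ e ≤ Real.exp b := by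
  rw [Real.rpow_def_of_pos hV]
  obtain ⟨h1, h2⟩ := abs_le.1 h
  exact ⟨Real.exp_le_exp.2 h1, Real.exp_le_exp.2 h2⟩

lemma scale_rpow_le (V p s c M : ℝ) (hV : 0 < V) (hp : 0 < p) (hc : 0 ≤ c)
    (h : c ^ s ≤ M * V ^ ((p - s) / p)) : (c * V ^ (1 / p)) ^ s ≤ M * V := by
  have h1 : (c * V ^ (1 / p)) ^ s = c ^ s * V ^ (s / p) := by
    rw [Real.mul_rpow hc (Real.rpow_nonneg hV.le _), ← Real.rpow_mul hV.le]
    ring_nf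
  have h2 : M * V = (M * V ^ ((p - s) / p)) * V ^ (s / p) := by
    rw [mul_assoc, ← Real.rpow_add hV]
    congr 2
    field_simp
    rw [sub_add_cancel, div_self hp.ne', Real.rpow_one]
  rw [h1, h2]
  exact mul_le_mul_of_nonneg_right h (Real.rpow_nonneg hV.le _)

lemma scale_rpow_ge (V p s c M : ℝ) (hV : 0 < V) (hp : 0 < p) (hc : 0 ≤ c)
    (h : M * V ^ ((p - s) / p) ≤ c ^ s) : M * V ≤ (c * V ^ (1 / p)) ^ s := by
  have h1 : (c * V ^ (1 / p)) ^ s = c ^ s * V ^ (s / p) := by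
    rw [Real.mul_rpow hc (Real.rpow_nonneg hV.le _), ← Real.rpow_mul hV.le]
    ring_nf
  have h2 : M * V = (M * V ^ ((p - s) / p)) * V ^ (s / p) := by
    rw [mul_assoc, ← Real.rpow_add hV]
    congr 2
    field_simp
    rw [sub_add_cancel, div_self hp.ne', Real.rpow_one]
  rw [h1, h2]
  exact mul_le_mul_of_nonneg_right h (Real.rpow_nonneg hV.le _)
open MeasureTheory ENNReal Set

lemma logHolder_cube {n : ℕ} (q : (Fin n → ℝ) → ℝ) (qm qp : ℝ) (hqm : 1 < qm)
    (hbound : ∀ x, qm ≤ q x ∧ q x ≤ qp) (Cloc : ℝ) (hCloc : 0 < Cloc)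
    (hlog : ∀ x y : Fin n → ℝ, dist x y ≤ 1/2 →
      |q x - q y| ≤ Cloc / (-Real.log (dist x y)))
    (r : ℝ) (hr : 0 < r) (hrn : r ^ n ≤ 2 ^ n)
    (x y : Fin n → ℝ) (hd : dist x y ≤ r) :
    |Real.log (r ^ n) * ((q x - q y) / q x)| ≤
      (n * Real.log 2 * (qp - qm) + n * Cloc) / qm := by
  have hqx : 0 < q x := lt_of_lt_of_le (by linarith) (hbound x).1
  have hqpm : qm ≤ qp := le_trans (hbound x).1 (hbound x).2
  have hlog2 : (0:ℝ) < Real.log 2 := Real.log_pos (by norm_num)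
  have hn0 : (0:ℝ) ≤ (n:ℝ) := Nat.cast_nonneg n
  have hL1 : (0:ℝ) ≤ (n:ℝ) * Real.log 2 * (qp - qm) :=
    mul_nonneg (mul_nonneg hn0 hlog2.le) (by linarith)
  have hL2 : (0:ℝ) ≤ (n:ℝ) * Cloc := mul_nonneg hn0 hCloc.le
  have key : |Real.log (r ^ n)| * |q x - q y| ≤ n * Real.log 2 * (qp - qm) + n * Cloc := by
    rcases Nat.eq_zero_or_pos n with hn | hn
    · subst hn; simp only [pow_zero, Real.log_one, abs_zero, zero_mul, Nat.cast_zero]; linarith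
    rcases le_or_gt (1/2 : ℝ) r with hr2 | hr2
    · have hrle2 : r ≤ 2 := (pow_le_pow_iff_left₀ hr.le (by norm_num) hn.ne').1 hrn
      have h1 : |Real.log r| ≤ Real.log 2 := by
        rw [abs_le]
        refine ⟨?_, Real.log_le_log hr hrle2⟩
        have h3 : Real.log (1/2 : ℝ) ≤ Real.log r := Real.log_le_log (by norm_num) hr2
        rw [one_div, Real.log_inv] at h3
        linarith
      have h2 : |q x - q y| ≤ qp - qm := by
        have hx := hbound x; have hy := hbound y
        rw [abs_le]
        exact ⟨by linarith [hx.1, hy.2], by linarith [hx.2, hy.1]⟩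
      have h4 : |Real.log (r ^ n)| ≤ (n:ℝ) * Real.log 2 := by
        rw [Real.log_pow, abs_mul, Nat.abs_cast]
        exact mul_le_mul_of_nonneg_left h1 hn0
      have h5 : |Real.log (r ^ n)| * |q x - q y| ≤ ((n:ℝ) * Real.log 2) * (qp - qm) :=
        mul_le_mul h4 h2 (abs_nonneg _) (by positivity)
      linarith
    · have hdist : dist x y ≤ 1/2 := hd.trans hr2.le
      have hq := hlog x y hdist
      have hlr : Real.log r < 0 := Real.log_neg hr (by linarith)
      rcases eq_or_lt_of_le (dist_nonneg : (0:ℝ) ≤ dist x y) with hd0 | hd0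
      · have hxy : x = y := by rw [← dist_le_zero, ← hd0]
        subst hxy
        simp only [sub_self, abs_zero, mul_zero]
        linarith
      · have hld : Real.log (dist x y) ≤ Real.log r := Real.log_le_log hd0 hd
        have hnegr : 0 < -Real.log r := by linarith
        have hnegd : 0 < -Real.log (dist x y) := by linarith
        have hq2 : |q x - q y| ≤ Cloc / (-Real.log r) :=
          hq.trans (div_le_div_of_nonneg_left hCloc.le hnegr (by linarith))
        have h4 : |Real.log (r ^ n)| = (n:ℝ) * (-Real.log r) := by
          rw [Real.log_pow, abs_mul, Nat.abs_cast, abs_of_neg hlr]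
        have h5 : |Real.log (r ^ n)| * |q x - q y|
            ≤ ((n:ℝ) * (-Real.log r)) * (Cloc / (-Real.log r)) := by
          rw [h4]
          exact mul_le_mul_of_nonneg_left hq2 (by positivity)
        have h6 : ((n:ℝ) * (-Real.log r)) * (Cloc / (-Real.log r))
            = (n:ℝ) * (Cloc / (-Real.log r) * (-Real.log r)) := by ring
        rw [div_mul_cancel₀ _ hnegr.ne'] at h6
        linarith
  have hstep : |Real.log (r ^ n) * ((q x - q y) / q x)|
      = (|Real.log (r ^ n)| * |q x - q y|) / q x := by
    rw [abs_mul, abs_div, abs_of_pos hqx, mul_div_assoc]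
  rw [hstep]
  exact div_le_div₀ (by linarith) key (by linarith) (hbound x).1
open MeasureTheory ENNReal Set

lemma key_estimate {n : ℕ} (q : (Fin n → ℝ) → ℝ) (qm : ℝ) (hqm : 0 < qm)
    (hb : ∀ x, qm ≤ q x) (qinf Cinf : ℝ) (hCinf : 0 < Cinf)
    (hinf : ∀ x : Fin n → ℝ, |q x - qinf| ≤ Cinf / Real.log (Real.exp 1 + ‖x‖))
    (A : ℝ) (hA : 0 < A) (y : Fin n → ℝ) (t : ℝ) (ht0 : 0 < t) (ht1 : t ≤ 1) :
    t ^ q y ≤ Real.exp (Cinf * (max (Real.log (2 * A)) 0 + (n + 1)) / qm) * t ^ qinf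
      + ((1:ℝ) + ‖y‖) ^ (-(n + 1 : ℝ)) / (2 * A) := by
  set C := Real.exp (Cinf * (max (Real.log (2 * A)) 0 + (n + 1)) / qm) with hC
  have hCarg : 0 ≤ Cinf * (max (Real.log (2 * A)) 0 + (n + 1)) / qm := by
    have h1 : (0:ℝ) ≤ max (Real.log (2 * A)) 0 := le_max_right _ _
    have h2 : (0:ℝ) ≤ (n:ℝ) + 1 := by positivity
    positivity
  have hC1 : (1:ℝ) ≤ C := by
    rw [hC]
    calc (1:ℝ) = Real.exp 0 := Real.exp_zero.symm
      _ ≤ _ := Real.exp_le_exp.2 hCarg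
  have hSpos : (0:ℝ) < ((1:ℝ) + ‖y‖) ^ (-(n + 1 : ℝ)) / (2 * A) :=
    div_pos (Real.rpow_pos_of_pos (by positivity : (0:ℝ) < 1 + ‖y‖) _) (by positivity)
  have hnormpos : (0:ℝ) < 1 + ‖y‖ := by positivity
  have hlogE : (1:ℝ) ≤ Real.log (Real.exp 1 + ‖y‖) := by
    have h1 : Real.exp 1 ≤ Real.exp 1 + ‖y‖ := by linarith [norm_nonneg y]
    have := Real.log_le_log (Real.exp_pos 1) h1
    rwa [Real.log_exp] at this
  have hlogEpos : (0:ℝ) < Real.log (Real.exp 1 + ‖y‖) := by linarith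
  rcases le_or_gt qinf (q y) with hcase | hcase
  · -- q y ≥ qinf : t^qy ≤ t^qinf
    have h1 : t ^ q y ≤ t ^ qinf := Real.rpow_le_rpow_of_exponent_ge ht0 ht1 hcase
    have h2 : t ^ qinf ≤ C * t ^ qinf := le_mul_of_one_le_left (Real.rpow_nonneg ht0.le _) hC1
    linarith
  · rcases le_or_gt (t ^ q y) (((1:ℝ) + ‖y‖) ^ (-(n + 1 : ℝ)) / (2 * A)) with hS | hS
    · have : (0:ℝ) ≤ C * t ^ qinf := by positivity
      linarith
    · -- t^{qy} > S ; show t^{qy} ≤ C t^{qinf}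
      set S := ((1:ℝ) + ‖y‖) ^ (-(n + 1 : ℝ)) / (2 * A) with hSdef
      have hqy : 0 < q y := lt_of_lt_of_le hqm (hb y)
      have hlogt : Real.log t ≤ 0 := Real.log_nonpos ht0.le ht1
      -- from S < t^qy : log S < q y * log t
      have hlogS : Real.log S < q y * Real.log t := by
        have := Real.log_lt_log hSpos hS
        rwa [Real.log_rpow ht0] at this
      -- -log t ≤ max (-log S) 0 / qm
      have hstep1 : -Real.log t ≤ max (-Real.log S) 0 / q y := by
        rcases le_or_gt 0 (-Real.log S) with h | h
        · rw [max_eq_left h]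
          rw [div_eq_inv_mul]
          have : -(q y * Real.log t) < -Real.log S := by linarith
          have h2 : q y * (-Real.log t) < -Real.log S := by linarith [this]
          calc -Real.log t = (q y)⁻¹ * (q y * (-Real.log t)) := by
                field_simp
            _ ≤ (q y)⁻¹ * (-Real.log S) := by
                apply mul_le_mul_of_nonneg_left h2.le (by positivity)
        · -- -log S < 0 : then q y * log t > log S > 0 impossible since log t ≤ 0... 
          exfalso
          have h1 : 0 < Real.log S := by linarith
          have h2 : q y * Real.log t ≤ 0 := mul_nonpos_of_nonneg_of_nonpos hqy.le hlogt
          linarith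
      have hstep2 : max (-Real.log S) 0 / q y ≤ max (-Real.log S) 0 / qm := by
        rcases eq_or_lt_of_le (hb y) with h | h
        · rw [h]
        · exact div_le_div_of_nonneg_left (le_max_right _ _) hqm (hb y) |>.trans_eq rfl
      have hE1 : (1:ℝ) < Real.exp 1 := by
        have := Real.add_one_le_exp 1
        linarith
      -- compute -log S
      have hlogSval : -Real.log S = Real.log (2 * A) + ((n:ℝ) + 1) * Real.log (1 + ‖y‖) := by
        rw [hSdef, Real.log_div (by positivity) (by positivity), Real.log_rpow hnormpos]
        ring
      have hloglog : Real.log (1 + ‖y‖) ≤ Real.log (Real.exp 1 + ‖y‖) :=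
        Real.log_le_log hnormpos (by linarith)
      have hlog1 : (0:ℝ) ≤ Real.log (1 + ‖y‖) := Real.log_nonneg (by linarith [norm_nonneg y])
      have hmaxbound : max (-Real.log S) 0
          ≤ max (Real.log (2 * A)) 0 + ((n:ℝ) + 1) * Real.log (Real.exp 1 + ‖y‖) := by
        apply max_le
        · rw [hlogSval]
          have : Real.log (2 * A) ≤ max (Real.log (2 * A)) 0 := le_max_left _ _
          have h2 : ((n:ℝ) + 1) * Real.log (1 + ‖y‖) ≤ ((n:ℝ) + 1) * Real.log (Real.exp 1 + ‖y‖) := by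
            apply mul_le_mul_of_nonneg_left hloglog (by positivity)
          linarith
        · have : (0:ℝ) ≤ max (Real.log (2 * A)) 0 := le_max_right _ _
          nlinarith [hlogEpos]
      -- main exponent bound
      have hqdiff : q y < qinf := hcase
      have habs : qinf - q y ≤ Cinf / Real.log (Real.exp 1 + ‖y‖) := by
        have h := hinf y
        rw [abs_sub_comm] at h
        exact (abs_le.1 h).2
      have hfinal : (qinf - q y) * (-Real.log t)
          ≤ Cinf * (max (Real.log (2 * A)) 0 + (n + 1)) / qm := by
        have h1 : (qinf - q y) * (-Real.log t) ≤ (qinf - q y) * (max (-Real.log S) 0 / qm) := by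
          apply mul_le_mul_of_nonneg_left (hstep1.trans hstep2) (by linarith)
        have h2 : (qinf - q y) * (max (-Real.log S) 0 / qm)
            ≤ (Cinf / Real.log (Real.exp 1 + ‖y‖)) *
              ((max (Real.log (2 * A)) 0 + ((n:ℝ) + 1) * Real.log (Real.exp 1 + ‖y‖)) / qm) := by
          apply mul_le_mul habs _ (by positivity) (by positivity)
          gcongr
        have h3 : (Cinf / Real.log (Real.exp 1 + ‖y‖)) *
              ((max (Real.log (2 * A)) 0 + ((n:ℝ) + 1) * Real.log (Real.exp 1 + ‖y‖)) / qm)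
            ≤ Cinf * (max (Real.log (2 * A)) 0 + (n + 1)) / qm := by
          set M := max (Real.log (2 * A)) 0 with hM
          set l := Real.log (Real.exp 1 + ‖y‖) with hl
          have hM0 : 0 ≤ M := le_max_right _ _
          have hl0 : l ≠ 0 := by positivity
          have heq : Cinf / l * ((M + ((n:ℝ) + 1) * l) / qm)
              = Cinf * (M / l + ((n:ℝ) + 1)) / qm := by
            field_simp
            try ring
          rw [heq]
          have hMl : M / l ≤ M := div_le_self hM0 hlogE
          gcongr
        linarith
      -- conclude
      have ht2 : t ^ (q y - qinf) ≤ C := by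
        rw [Real.rpow_def_of_pos ht0, hC]
        apply Real.exp_le_exp.2
        calc Real.log t * (q y - qinf) = (qinf - q y) * (-Real.log t) := by ring
          _ ≤ _ := hfinal
      have hsplit : t ^ q y = t ^ qinf * t ^ (q y - qinf) := by
        rw [← Real.rpow_add ht0]; ring_nf
      have : t ^ q y ≤ C * t ^ qinf := by
        rw [hsplit]
        calc t ^ qinf * t ^ (q y - qinf) ≤ t ^ qinf * C :=
              mul_le_mul_of_nonneg_left ht2 (Real.rpow_nonneg ht0.le _)
          _ = C * t ^ qinf := mul_comm _ _
      linarith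

lemma rpow_upper (a b p : ℝ) (ha : 0 ≤ a) (hb : 0 ≤ b) (hp : 0 < p) (h : a ≤ b ^ (1/p)) :
    a ^ p ≤ b := by
  calc a ^ p ≤ (b ^ (1/p)) ^ p := Real.rpow_le_rpow ha h hp.le
    _ = b := by rw [← Real.rpow_mul hb, one_div, inv_mul_cancel₀ hp.ne', Real.rpow_one]

lemma rpow_lower (a b p : ℝ) (hb : 0 ≤ b) (hp : 0 < p) (h : b ^ (1/p) ≤ a) :
    b ≤ a ^ p := by
  have ha : 0 ≤ a := le_trans (Real.rpow_nonneg hb _) h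
  calc b = (b ^ (1/p)) ^ p := by
        rw [← Real.rpow_mul hb, one_div, inv_mul_cancel₀ hp.ne', Real.rpow_one]
    _ ≤ a ^ p := Real.rpow_le_rpow (Real.rpow_nonneg hb _) h hp.le

lemma cube_facts {n : ℕ} (c : Fin n → ℝ) (r : ℝ) (hr : 0 < r) :
    MeasurableSet (Set.univ.pi fun i => Set.Icc (c i) (c i + r)) ∧
    volume (Set.univ.pi fun i => Set.Icc (c i) (c i + r)) = ENNReal.ofReal (r ^ n) ∧
    (volume (Set.univ.pi fun i => Set.Icc (c i) (c i + r))).toReal = r ^ n ∧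
    (∀ x ∈ (Set.univ.pi fun i => Set.Icc (c i) (c i + r)),
      ∀ y ∈ (Set.univ.pi fun i => Set.Icc (c i) (c i + r)), dist x y ≤ r) := by
  have hmeas : MeasurableSet (Set.univ.pi fun i => Set.Icc (c i) (c i + r)) :=
    MeasurableSet.univ_pi fun i => measurableSet_Icc
  have hvol : volume (Set.univ.pi fun i => Set.Icc (c i) (c i + r))
      = ENNReal.ofReal (r ^ n) := by
    rw [volume_pi_pi]
    simp only [Real.volume_Icc, add_sub_cancel_left]
    rw [Finset.prod_const, ← ENNReal.ofReal_pow hr.le, Finset.card_univ, Fintype.card_fin]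
  refine ⟨hmeas, hvol, by rw [hvol, ENNReal.toReal_ofReal (by positivity)], ?_⟩
  intro x hx y hy
  rw [Set.mem_univ_pi] at hx hy
  rw [dist_pi_le_iff hr.le]
  intro i
  have h1 := hx i; have h2 := hy i
  simp only [Set.mem_Icc] at h1 h2
  rw [Real.dist_eq, abs_le]
  constructor <;> linarith [h1.1, h1.2, h2.1, h2.2]

lemma sqrt_le_one_add_quarter (r : ℝ) (hr : 0 ≤ r) : Real.sqrt r ≤ 1 + r / 4 := by
  nlinarith [Real.sq_sqrt hr, Real.sqrt_nonneg r, sq_nonneg (1 - Real.sqrt r / 2)]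

set_option maxHeartbeats 2000000 in
/-- for `q(·) ∈ 𝒞^{log}(ℝⁿ) ∩ 𝒫(ℝⁿ)` with limit value `q∞` at
infinity, the norm of the characteristic function of a cube `Q` is comparable to
`|Q|^{1/q(x)}` for small cubes (`|Q| ≤ 2ⁿ`, `x ∈ Q`) and to `|Q|^{1/q∞}` for large
cubes (`|Q| ≥ 1`). -/
theorem characteristic_norm_estimate {n : ℕ} (q : (Fin n → ℝ) → ℝ)
    (hmeas : Measurable q)
    (qm qp : ℝ) (hqm : 1 < qm) (hbound : ∀ x, qm ≤ q x ∧ q x ≤ qp)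
    (Cloc : ℝ) (hCloc : 0 < Cloc)
    (hlog : ∀ x y : Fin n → ℝ, dist x y ≤ 1/2 →
      |q x - q y| ≤ Cloc / (-Real.log (dist x y)))
    (qinf : ℝ) (Cinf : ℝ) (hCinf : 0 < Cinf)
    (hinf : ∀ x : Fin n → ℝ, |q x - qinf| ≤ Cinf / Real.log (Real.exp 1 + ‖x‖)) :
    ∃ c₁ c₂ : ℝ, 0 < c₁ ∧ 0 < c₂ ∧
      (∀ Q : Set (Fin n → ℝ), IsCube Q → (volume Q).toReal ≤ 2 ^ n →
        ∀ x ∈ Q,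
          c₁ * (volume Q).toReal ^ (1 / q x) ≤ luxNorm q (Q.indicator fun _ => (1:ℝ)) ∧
          luxNorm q (Q.indicator fun _ => (1:ℝ)) ≤ c₂ * (volume Q).toReal ^ (1 / q x)) ∧
      (∀ Q : Set (Fin n → ℝ), IsCube Q → 1 ≤ (volume Q).toReal →
          c₁ * (volume Q).toReal ^ (1 / qinf) ≤ luxNorm q (Q.indicator fun _ => (1:ℝ)) ∧
          luxNorm q (Q.indicator fun _ => (1:ℝ)) ≤ c₂ * (volume Q).toReal ^ (1 / qinf)) := by
  have hqm0 : (0:ℝ) < qm := by linarith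
  have hq : ∀ x, 0 < q x := fun x => lt_of_lt_of_le hqm0 (hbound x).1
  have hqb : ∀ x, qm ≤ q x := fun x => (hbound x).1
  have hqpm : qm ≤ qp := le_trans (hbound default).1 (hbound default).2
  have hlog2 : (0:ℝ) < Real.log 2 := Real.log_pos (by norm_num)
  -- constants
  set L : ℝ := n * Real.log 2 * (qp - qm) + n * Cloc with hLdef
  have hL0 : 0 ≤ L := by
    have h1 : (0:ℝ) ≤ (n:ℝ) * Real.log 2 * (qp - qm) :=
      mul_nonneg (by positivity) (by linarith)
    have h2 : (0:ℝ) ≤ (n:ℝ) * Cloc := by positivity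
    linarith
  set K : ℝ := Real.exp (L / qm) with hKdef
  have hK1 : 1 ≤ K := by
    rw [hKdef]
    calc (1:ℝ) = Real.exp 0 := Real.exp_zero.symm
      _ ≤ _ := Real.exp_le_exp.2 (by positivity)
  have hK0 : 0 < K := by positivity
  have hAint : Integrable (fun x : Fin n → ℝ => ((1:ℝ) + ‖x‖) ^ (-((n:ℝ)+1))) volume := by
    apply integrable_one_add_norm
    simp
  set A : ℝ := ∫ x : Fin n → ℝ, ((1:ℝ) + ‖x‖) ^ (-((n:ℝ)+1)) with hAdef
  have hA : 0 < A := by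
    rw [hAdef]
    rw [integral_pos_iff_support_of_nonneg_ae _ hAint]
    · have : (Function.support fun x : Fin n → ℝ => ((1:ℝ) + ‖x‖) ^ (-((n:ℝ)+1))) = univ := by
        ext x
        simp only [Function.mem_support, Set.mem_univ, iff_true]
        exact (Real.rpow_pos_of_pos (by positivity) _).ne'
      rw [this]
      exact isOpen_univ.measure_pos volume univ_nonempty
    · exact Filter.Eventually.of_forall fun x => Real.rpow_nonneg (by positivity) _
  set C : ℝ := Real.exp (Cinf * (max (Real.log (2 * A)) 0 + ((n:ℝ) + 1)) / qm) with hCdef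
  have hC1 : 1 ≤ C := by
    rw [hCdef]
    calc (1:ℝ) = Real.exp 0 := Real.exp_zero.symm
      _ ≤ _ := by
          apply Real.exp_le_exp.2
          have : (0:ℝ) ≤ max (Real.log (2*A)) 0 := le_max_right _ _
          positivity
  have hC0 : 0 < C := by positivity
  set K₂ : ℝ := Real.exp (2 * n * Cinf / qm) with hK₂def
  have hK₂1 : 1 ≤ K₂ := by
    rw [hK₂def]
    calc (1:ℝ) = Real.exp 0 := Real.exp_zero.symm
      _ ≤ _ := Real.exp_le_exp.2 (by positivity)
  have hK₂0 : 0 < K₂ := by positivity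
  set c1 : ℝ := min (min 1 (K⁻¹ ^ (1/qm))) ((4⁻¹ * K₂⁻¹) ^ (1/qm)) with hc1def
  set c2 : ℝ := max (max 1 (K ^ (1/qm))) ((2*C) ^ (1/qinf)) with hc2def
  have hc10 : 0 < c1 := by
    rw [hc1def]
    apply lt_min (lt_min one_pos (Real.rpow_pos_of_pos (by positivity) _))
      (Real.rpow_pos_of_pos (by positivity) _)
  have hc11 : c1 ≤ 1 := le_trans (min_le_left _ _) (min_le_left _ _)
  have hc21 : 1 ≤ c2 := le_trans (le_max_left _ _) (le_max_left _ _)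
  have hc20 : 0 < c2 := lt_of_lt_of_le one_pos hc21
  have hc1K : c1 ^ qm ≤ K⁻¹ :=
    rpow_upper c1 K⁻¹ qm hc10.le (by positivity) hqm0
      (le_trans (min_le_left _ _) (min_le_right _ _))
  have hc1K₂ : c1 ^ qm ≤ 4⁻¹ * K₂⁻¹ :=
    rpow_upper c1 (4⁻¹ * K₂⁻¹) qm hc10.le (by positivity) hqm0 (min_le_right _ _)
  have hc2K : K ≤ c2 ^ qm :=
    rpow_lower c2 K qm hK0.le hqm0 (le_trans (le_max_right _ _) (le_max_left _ _))
  refine ⟨c1, c2, hc10, hc20, ?_, ?_⟩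
  · -- small cubes
    rintro Q ⟨c, r, hr, rfl⟩ hQvol x hx
    obtain ⟨hQmeas, hvol, hV, hdiam⟩ := cube_facts c r hr
    set V : ℝ := r ^ n with hVdef
    have hV0 : 0 < V := by positivity
    rw [hV] at hQvol ⊢
    have hrn : r ^ n ≤ 2 ^ n := hQvol
    -- pointwise exponent bounds
    have hexp : ∀ y ∈ (Set.univ.pi fun i => Set.Icc (c i) (c i + r)),
        K⁻¹ ≤ V ^ ((q x - q y) / q x) ∧ V ^ ((q x - q y) / q x) ≤ K := by
      intro y hy
      have hlh := logHolder_cube q qm qp hqm hbound Cloc hCloc hlog r hr hrn x y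
        (hdiam x hx y hy)
      have := rpow_bounds V ((q x - q y) / q x) (L / qm) hV0 hlh
      rw [← hKdef] at this
      refine ⟨?_, this.2⟩
      have hKinv : K⁻¹ = Real.exp (-(L / qm)) := by rw [hKdef, ← Real.exp_neg]
      rw [hKinv]
      exact this.1
    have hb := lux_bounds q qm hqm0 hqb _ hQmeas
      (c1 * V ^ (1 / q x)) (c2 * V ^ (1 / q x))
      (by positivity) (by positivity) ?_ ?_
    · exact hb
    · -- lower: modular at θ ≥ 1
      have hpt : ∀ y ∈ (Set.univ.pi fun i => Set.Icc (c i) (c i + r)),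
          ENNReal.ofReal V⁻¹ ≤ ENNReal.ofReal ((1 / (c1 * V ^ (1 / q x))) ^ q y) := by
        intro y hy
        apply ENNReal.ofReal_le_ofReal
        have hθ0 : 0 < c1 * V ^ (1 / q x) := by positivity
        have hkey : (c1 * V ^ (1 / q x)) ^ q y ≤ 1 * V := by
          apply scale_rpow_le V (q x) (q y) c1 1 hV0 (hq x) hc10.le
          rw [one_mul]
          calc c1 ^ q y ≤ c1 ^ qm :=
                Real.rpow_le_rpow_of_exponent_ge hc10 hc11 (hqb y)
            _ ≤ K⁻¹ := hc1K
            _ ≤ V ^ ((q x - q y) / q x) := (hexp y hy).1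
        rw [one_mul] at hkey
        rw [one_div, Real.inv_rpow hθ0.le]
        exact inv_anti₀ (Real.rpow_pos_of_pos hθ0 _) hkey
      calc (1:ℝ≥0∞) = ENNReal.ofReal V⁻¹ * volume (Set.univ.pi fun i => Set.Icc (c i) (c i + r)) := by
            rw [hvol, ← ENNReal.ofReal_mul (by positivity), inv_mul_cancel₀ hV0.ne',
              ENNReal.ofReal_one]
        _ = ∫⁻ _ in (Set.univ.pi fun i => Set.Icc (c i) (c i + r)), ENNReal.ofReal V⁻¹ ∂volume := by
            rw [setLIntegral_const]
        _ ≤ _ := setLIntegral_mono' hQmeas hpt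
    · -- upper: modular at θ' ≤ 1
      have hpt : ∀ y ∈ (Set.univ.pi fun i => Set.Icc (c i) (c i + r)),
          ENNReal.ofReal ((1 / (c2 * V ^ (1 / q x))) ^ q y) ≤ ENNReal.ofReal V⁻¹ := by
        intro y hy
        apply ENNReal.ofReal_le_ofReal
        have hθ0 : 0 < c2 * V ^ (1 / q x) := by positivity
        have hkey : 1 * V ≤ (c2 * V ^ (1 / q x)) ^ q y := by
          apply scale_rpow_ge V (q x) (q y) c2 1 hV0 (hq x) hc20.le
          rw [one_mul]
          calc V ^ ((q x - q y) / q x) ≤ K := (hexp y hy).2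
            _ ≤ c2 ^ qm := hc2K
            _ ≤ c2 ^ q y := Real.rpow_le_rpow_of_exponent_le hc21 (hqb y)
        rw [one_mul] at hkey
        rw [one_div, Real.inv_rpow hθ0.le]
        exact inv_anti₀ hV0 hkey
      calc ∫⁻ y in (Set.univ.pi fun i => Set.Icc (c i) (c i + r)),
            ENNReal.ofReal ((1 / (c2 * V ^ (1 / q x))) ^ q y) ∂volume
          ≤ ∫⁻ _ in (Set.univ.pi fun i => Set.Icc (c i) (c i + r)), ENNReal.ofReal V⁻¹ ∂volume :=
            setLIntegral_mono' hQmeas hpt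
        _ = ENNReal.ofReal V⁻¹ * volume (Set.univ.pi fun i => Set.Icc (c i) (c i + r)) := by
            rw [setLIntegral_const]
        _ = 1 := by
            rw [hvol, ← ENNReal.ofReal_mul (by positivity), inv_mul_cancel₀ hV0.ne',
              ENNReal.ofReal_one]
  · -- large cubes
    rintro Q ⟨c, r, hr, rfl⟩ hQvol
    obtain ⟨hQmeas, hvol, hV, hdiam⟩ := cube_facts c r hr
    set V : ℝ := r ^ n with hVdef
    have hV0 : 0 < V := by positivity
    rw [hV] at hQvol ⊢
    rcases Nat.eq_zero_or_pos n with hn | hn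
    · -- n = 0 : the cube is a point mass space with V = 1
      have hV1 : V = 1 := by rw [hVdef, hn, pow_zero]
      rw [hV1, Real.one_rpow, mul_one, mul_one]
      have h1 : (1:ℝ≥0∞) ≤ ∫⁻ y in (Set.univ.pi fun i => Set.Icc (c i) (c i + r)),
          ENNReal.ofReal ((1 / c1) ^ q y) ∂volume := by
        calc (1:ℝ≥0∞) = ENNReal.ofReal 1 *
              volume (Set.univ.pi fun i => Set.Icc (c i) (c i + r)) := by
              rw [hvol, hV1, ENNReal.ofReal_one, one_mul]
          _ = ∫⁻ _ in (Set.univ.pi fun i => Set.Icc (c i) (c i + r)),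
                ENNReal.ofReal 1 ∂volume := (setLIntegral_const _ _).symm
          _ ≤ _ := by
              apply setLIntegral_mono' hQmeas
              intro y _
              apply ENNReal.ofReal_le_ofReal
              exact Real.one_le_rpow (one_le_one_div hc10 hc11) (hq y).le
      have h2 : ∫⁻ y in (Set.univ.pi fun i => Set.Icc (c i) (c i + r)),
          ENNReal.ofReal ((1 / c2) ^ q y) ∂volume ≤ 1 := by
        calc ∫⁻ y in (Set.univ.pi fun i => Set.Icc (c i) (c i + r)),
              ENNReal.ofReal ((1 / c2) ^ q y) ∂volume
            ≤ ∫⁻ _ in (Set.univ.pi fun i => Set.Icc (c i) (c i + r)),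
                ENNReal.ofReal 1 ∂volume := by
              apply setLIntegral_mono' hQmeas
              intro y _
              apply ENNReal.ofReal_le_ofReal
              exact Real.rpow_le_one (by positivity) ((div_le_one hc20).2 hc21) (hq y).le
          _ = ENNReal.ofReal 1 *
                volume (Set.univ.pi fun i => Set.Icc (c i) (c i + r)) := setLIntegral_const _ _
          _ = 1 := by rw [hvol, hV1, ENNReal.ofReal_one, one_mul]
      exact lux_bounds q qm hqm0 hqb _ hQmeas c1 c2 hc10 hc20 h1 h2
    · -- n ≥ 1
      have hrn1 : (1:ℝ) ≤ V := hQvol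
      have hr1 : 1 ≤ r := by
        by_contra hcon
        push_neg at hcon
        have := pow_lt_one₀ hr.le hcon hn.ne'
        rw [← hVdef] at this
        linarith
      have hqinf : qm ≤ qinf := by
        by_contra hcon
        push_neg at hcon
        set ε := qm - qinf with hε
        have hε0 : 0 < ε := by linarith
        set M : ℝ := Real.exp (2 * Cinf / ε) with hM
        have hM0 : 0 < M := Real.exp_pos _
        set x₀ : Fin n → ℝ := fun _ => M with hx₀
        have hMnorm : M ≤ ‖x₀‖ := by
          have h := norm_le_pi_norm x₀ ⟨0, hn⟩
          rwa [Real.norm_eq_abs, abs_of_pos hM0] at h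
        have hlogM : 2 * Cinf / ε ≤ Real.log (Real.exp 1 + ‖x₀‖) := by
          calc 2 * Cinf / ε = Real.log M := (Real.log_exp _).symm
            _ ≤ Real.log (Real.exp 1 + ‖x₀‖) :=
                Real.log_le_log hM0 (by linarith [Real.exp_pos 1])
        have h1 := hinf x₀
        have h2 : Cinf / Real.log (Real.exp 1 + ‖x₀‖) ≤ Cinf / (2 * Cinf / ε) :=
          div_le_div_of_nonneg_left hCinf.le (by positivity) hlogM
        have h3 : Cinf / (2 * Cinf / ε) = ε / 2 := by
          field_simp
        have h5 := (abs_le.1 h1).2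
        have h6 := hqb x₀
        rw [h3] at h2
        have : q x₀ - qinf ≤ ε / 2 := le_trans h5 h2
        rw [hε] at this hε0
        linarith
      have hqinf0 : 0 < qinf := by linarith
      have hc2C : 2 * C ≤ c2 ^ qinf :=
        rpow_lower c2 (2 * C) qinf (by positivity) hqinf0 (le_max_right _ _)
      set θ : ℝ := c1 * V ^ (1 / qinf) with hθdef
      set θ' : ℝ := c2 * V ^ (1 / qinf) with hθ'def
      have hVr1 : 1 ≤ V ^ (1 / qinf) := Real.one_le_rpow hrn1 (by positivity)
      have hθ'1 : 1 ≤ θ' := by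
        rw [hθ'def]
        calc (1:ℝ) = 1 * 1 := (one_mul 1).symm
          _ ≤ c2 * V ^ (1 / qinf) := mul_le_mul hc21 hVr1 one_pos.le hc20.le
      have hθ'0 : 0 < θ' := by positivity
      have hθ0 : 0 < θ := by positivity
      have ht0 : 0 < 1 / θ' := by positivity
      have ht1 : 1 / θ' ≤ 1 := by rw [div_le_one hθ'0]; exact hθ'1
      have hθ'pow : θ' ^ qinf = c2 ^ qinf * V := by
        rw [hθ'def, Real.mul_rpow hc20.le (Real.rpow_nonneg hV0.le _), ← Real.rpow_mul hV0.le,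
          one_div, inv_mul_cancel₀ hqinf0.ne', Real.rpow_one]
      have hconst : C * (1 / θ') ^ qinf * V ≤ 2⁻¹ := by
        rw [one_div, Real.inv_rpow hθ'0.le, hθ'pow]
        have hh1 : (c2 ^ qinf * V)⁻¹ ≤ (2 * C * V)⁻¹ :=
          inv_anti₀ (by positivity) (mul_le_mul_of_nonneg_right hc2C hV0.le)
        calc C * (c2 ^ qinf * V)⁻¹ * V ≤ C * (2 * C * V)⁻¹ * V := by
              exact mul_le_mul_of_nonneg_right (mul_le_mul_of_nonneg_left hh1 hC0.le) hV0.le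
          _ = 2⁻¹ := by
              field_simp
      -- upper modular bound
      have h2 : ∫⁻ y in (Set.univ.pi fun i => Set.Icc (c i) (c i + r)),
          ENNReal.ofReal ((1 / θ') ^ q y) ∂volume ≤ 1 := by
        have hpt : ∀ y : Fin n → ℝ, ENNReal.ofReal ((1 / θ') ^ q y)
            ≤ ENNReal.ofReal (C * (1 / θ') ^ qinf)
              + ENNReal.ofReal (((1:ℝ) + ‖y‖) ^ (-((n:ℝ) + 1)) / (2 * A)) := by
          intro y
          have hke := key_estimate q qm hqm0 hqb qinf Cinf hCinf hinf A hA y (1 / θ') ht0 ht1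
          calc ENNReal.ofReal ((1 / θ') ^ q y)
              ≤ ENNReal.ofReal (C * (1 / θ') ^ qinf
                  + ((1:ℝ) + ‖y‖) ^ (-((n:ℝ) + 1)) / (2 * A)) :=
                ENNReal.ofReal_le_ofReal (by rw [hCdef]; exact hke)
            _ ≤ _ := ENNReal.ofReal_add_le
        have htail : ∫⁻ y in (Set.univ.pi fun i => Set.Icc (c i) (c i + r)),
            ENNReal.ofReal (((1:ℝ) + ‖y‖) ^ (-((n:ℝ) + 1)) / (2 * A)) ∂volume
              ≤ ENNReal.ofReal 2⁻¹ := by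
          calc ∫⁻ y in (Set.univ.pi fun i => Set.Icc (c i) (c i + r)),
              ENNReal.ofReal (((1:ℝ) + ‖y‖) ^ (-((n:ℝ) + 1)) / (2 * A)) ∂volume
              ≤ ∫⁻ y, ENNReal.ofReal (((1:ℝ) + ‖y‖) ^ (-((n:ℝ) + 1)) / (2 * A)) ∂volume :=
                setLIntegral_le_lintegral _ _
            _ = ENNReal.ofReal (∫ y : Fin n → ℝ, ((1:ℝ) + ‖y‖) ^ (-((n:ℝ) + 1)) / (2 * A)) :=
                (ofReal_integral_eq_lintegral_ofReal (hAint.div_const _)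
                  (Filter.Eventually.of_forall fun y =>
                    div_nonneg (Real.rpow_nonneg (by positivity) _) (by positivity))).symm
            _ = ENNReal.ofReal 2⁻¹ := by
                rw [integral_div, ← hAdef]
                congr 1
                rw [div_eq_iff (by positivity : (0:ℝ) < 2 * A).ne']
                ring
        calc ∫⁻ y in (Set.univ.pi fun i => Set.Icc (c i) (c i + r)),
            ENNReal.ofReal ((1 / θ') ^ q y) ∂volume
            ≤ ∫⁻ y in (Set.univ.pi fun i => Set.Icc (c i) (c i + r)),
                (ENNReal.ofReal (C * (1 / θ') ^ qinf)
                  + ENNReal.ofReal (((1:ℝ) + ‖y‖) ^ (-((n:ℝ) + 1)) / (2 * A))) ∂volume :=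
              lintegral_mono fun y => hpt y
          _ = ENNReal.ofReal (C * (1 / θ') ^ qinf)
                * volume (Set.univ.pi fun i => Set.Icc (c i) (c i + r))
              + ∫⁻ y in (Set.univ.pi fun i => Set.Icc (c i) (c i + r)),
                  ENNReal.ofReal (((1:ℝ) + ‖y‖) ^ (-((n:ℝ) + 1)) / (2 * A)) ∂volume := by
              rw [lintegral_add_left measurable_const, setLIntegral_const]
          _ ≤ ENNReal.ofReal (C * (1 / θ') ^ qinf) * ENNReal.ofReal V + ENNReal.ofReal 2⁻¹ := by
              apply add_le_add _ htail
              rw [hvol]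
          _ = ENNReal.ofReal (C * (1 / θ') ^ qinf * V) + ENNReal.ofReal 2⁻¹ := by
              rw [← ENNReal.ofReal_mul (by positivity : (0:ℝ) ≤ C * (1 / θ') ^ qinf)]
          _ ≤ ENNReal.ofReal 2⁻¹ + ENNReal.ofReal 2⁻¹ :=
              add_le_add_left (ENNReal.ofReal_le_ofReal hconst) _
          _ = 1 := by
              rw [← ENNReal.ofReal_add (by norm_num) (by norm_num)]
              norm_num
      -- lower modular bound via a subcube away from the origin
      set i₀ : Fin n := ⟨0, hn⟩ with hi₀
      set a : Fin n → ℝ := fun i =>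
        if i = i₀ then (if 0 ≤ c i₀ + r / 2 then c i₀ + 3 * r / 4 else c i₀) else c i with ha
      set d : Fin n → ℝ := fun i => if i = i₀ then r / 4 else r with hd
      set Q' : Set (Fin n → ℝ) := Set.univ.pi fun i => Set.Icc (a i) (a i + d i) with hQ'def
      have hQ'meas : MeasurableSet Q' := MeasurableSet.univ_pi fun i => measurableSet_Icc
      have hai₀ : a i₀ = if 0 ≤ c i₀ + r / 2 then c i₀ + 3 * r / 4 else c i₀ := by
        rw [ha]; simp
      have hdi₀ : d i₀ = r / 4 := by rw [hd]; simp
      have hane : ∀ i, i ≠ i₀ → a i = c i := fun i hi => by rw [ha]; simp [hi]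
      have hdne : ∀ i, i ≠ i₀ → d i = r := fun i hi => by rw [hd]; simp [hi]
      have hsub : Q' ⊆ (Set.univ.pi fun i => Set.Icc (c i) (c i + r)) := by
        intro y hy
        rw [hQ'def, Set.mem_univ_pi] at hy
        rw [Set.mem_univ_pi]
        intro i
        have h := hy i
        rw [Set.mem_Icc] at h ⊢
        by_cases hii : i = i₀
        · rw [hii] at h ⊢
          rw [hai₀, hdi₀] at h
          by_cases hc0 : 0 ≤ c i₀ + r / 2
          · rw [if_pos hc0] at h
            exact ⟨by linarith [h.1], by linarith [h.2]⟩
          · rw [if_neg hc0] at h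
            exact ⟨by linarith [h.1], by linarith [h.2]⟩
        · rw [hane i hii, hdne i hii] at h
          exact h
      have hvolQ' : volume Q' = ENNReal.ofReal (4⁻¹ * V) := by
        rw [hQ'def, volume_pi_pi]
        simp only [Real.volume_Icc, add_sub_cancel_left]
        rw [← ENNReal.ofReal_prod_of_nonneg]
        · congr 1
          rw [← Finset.mul_prod_erase Finset.univ d (Finset.mem_univ i₀)]
          have herase : ∏ i ∈ Finset.univ.erase i₀, d i = r ^ (n - 1) := by
            rw [Finset.prod_congr rfl fun i hi => hdne i (Finset.ne_of_mem_erase hi),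
              Finset.prod_const, Finset.card_erase_of_mem (Finset.mem_univ _),
              Finset.card_univ, Fintype.card_fin]
          rw [herase, hdi₀, hVdef]
          have hn' : n - 1 + 1 = n := Nat.succ_pred_eq_of_pos hn
          calc r / 4 * r ^ (n - 1) = 4⁻¹ * (r ^ (n - 1) * r) := by ring
            _ = 4⁻¹ * r ^ n := by rw [← pow_succ, hn']
        · intro i _
          by_cases hii : i = i₀
          · rw [hii, hdi₀]; positivity
          · rw [hdne i hii]; exact hr.le
      have hnormQ' : ∀ y ∈ Q', r / 4 ≤ ‖y‖ := by
        intro y hy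
        rw [hQ'def, Set.mem_univ_pi] at hy
        have h := hy i₀
        rw [Set.mem_Icc, hai₀, hdi₀] at h
        have habs : r / 4 ≤ |y i₀| := by
          by_cases hc0 : 0 ≤ c i₀ + r / 2
          · rw [if_pos hc0] at h
            have : r / 4 ≤ y i₀ := by linarith [h.1]
            exact this.trans (le_abs_self _)
          · rw [if_neg hc0] at h
            push_neg at hc0
            have : y i₀ ≤ -(r / 4) := by linarith [h.2]
            calc r / 4 ≤ -(y i₀) := by linarith
              _ ≤ |y i₀| := neg_le_abs _
        calc r / 4 ≤ |y i₀| := habs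
          _ = ‖y i₀‖ := (Real.norm_eq_abs _).symm
          _ ≤ ‖y‖ := norm_le_pi_norm y i₀
      -- pointwise lower estimate on the subcube
      have hlogr : 0 ≤ Real.log r := Real.log_nonneg hr1
      have hpt : ∀ y ∈ Q', ENNReal.ofReal ((4⁻¹ * V)⁻¹)
          ≤ ENNReal.ofReal ((1 / θ) ^ q y) := by
        intro y hy
        apply ENNReal.ofReal_le_ofReal
        -- log (e + ‖y‖) ≥ (log r)/2 and ≥ 1
        have hsq : Real.sqrt r ≤ Real.exp 1 + ‖y‖ := by
          have h1 : Real.sqrt r ≤ 1 + r / 4 := sqrt_le_one_add_quarter r hr.le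
          have h2 := hnormQ' y hy
          have h3 : (1:ℝ) ≤ Real.exp 1 := by linarith [Real.add_one_le_exp 1]
          linarith
        have hEy : (1:ℝ) ≤ Real.log (Real.exp 1 + ‖y‖) := by
          have h1 : Real.exp 1 ≤ Real.exp 1 + ‖y‖ := by linarith [norm_nonneg y]
          have := Real.log_le_log (Real.exp_pos 1) h1
          rwa [Real.log_exp] at this
        have hEy0 : (0:ℝ) < Real.log (Real.exp 1 + ‖y‖) := by linarith
        have hhalf : Real.log r / 2 ≤ Real.log (Real.exp 1 + ‖y‖) := by
          rcases le_or_gt r 1 with hr' | hr'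
          · have : Real.log r ≤ 0 := Real.log_nonpos hr.le hr'
            linarith
          · calc Real.log r / 2 = Real.log (Real.sqrt r) := (Real.log_sqrt hr.le).symm
              _ ≤ Real.log (Real.exp 1 + ‖y‖) :=
                  Real.log_le_log (Real.sqrt_pos.2 hr) hsq
        -- exponent bound
        have hbnd : |Real.log V * ((qinf - q y) / qinf)| ≤ 2 * n * Cinf / qm := by
          have hlogV : Real.log V = n * Real.log r := by rw [hVdef, Real.log_pow]
          have habsq : |qinf - q y| ≤ Cinf / Real.log (Real.exp 1 + ‖y‖) := by
            have hh := hinf y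
            rwa [abs_sub_comm] at hh
          have hstep : |Real.log V * ((qinf - q y) / qinf)|
              = Real.log V * |qinf - q y| / qinf := by
            rw [abs_mul, abs_div, abs_of_pos hqinf0, abs_of_nonneg (by
              rw [hlogV]; positivity), mul_div_assoc]
          rw [hstep]
          have e1 : Real.log V * |qinf - q y|
              ≤ (n:ℝ) * Real.log r * (Cinf / Real.log (Real.exp 1 + ‖y‖)) := by
            rw [hlogV]
            exact mul_le_mul_of_nonneg_left habsq (by positivity)
          have e2 : (n:ℝ) * Real.log r * (Cinf / Real.log (Real.exp 1 + ‖y‖))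
              ≤ 2 * n * Cinf := by
            have heq : (n:ℝ) * Real.log r * (Cinf / Real.log (Real.exp 1 + ‖y‖))
                = (n:ℝ) * Cinf * (Real.log r / Real.log (Real.exp 1 + ‖y‖)) := by
              ring
            rw [heq]
            calc (n:ℝ) * Cinf * (Real.log r / Real.log (Real.exp 1 + ‖y‖))
                ≤ (n:ℝ) * Cinf * 2 := by
                  apply mul_le_mul_of_nonneg_left _ (by positivity)
                  rw [div_le_iff₀ hEy0]
                  linarith
              _ = 2 * n * Cinf := by ring
          exact div_le_div₀ (by positivity) (e1.trans e2) hqm0 hqinf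
        have hVexp := rpow_bounds V ((qinf - q y) / qinf) (2 * n * Cinf / qm) hV0 hbnd
        have hK₂inv : K₂⁻¹ = Real.exp (-(2 * n * Cinf / qm)) := by
          rw [hK₂def, ← Real.exp_neg]
        have hkey : θ ^ q y ≤ 4⁻¹ * V := by
          apply scale_rpow_le V qinf (q y) c1 4⁻¹ hV0 hqinf0 hc10.le
          calc c1 ^ q y ≤ c1 ^ qm :=
                Real.rpow_le_rpow_of_exponent_ge hc10 hc11 (hqb y)
            _ ≤ 4⁻¹ * K₂⁻¹ := hc1K₂
            _ ≤ 4⁻¹ * V ^ ((qinf - q y) / qinf) := by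
                apply mul_le_mul_of_nonneg_left _ (by norm_num)
                rw [hK₂inv]
                exact hVexp.1
        rw [one_div, Real.inv_rpow hθ0.le]
        exact inv_anti₀ (Real.rpow_pos_of_pos hθ0 _) hkey
      have h1 : (1:ℝ≥0∞) ≤ ∫⁻ y in (Set.univ.pi fun i => Set.Icc (c i) (c i + r)),
          ENNReal.ofReal ((1 / θ) ^ q y) ∂volume := by
        calc (1:ℝ≥0∞) = ENNReal.ofReal ((4⁻¹ * V)⁻¹) * volume Q' := by
              rw [hvolQ', ← ENNReal.ofReal_mul (by positivity),
                inv_mul_cancel₀ (by positivity : (4⁻¹ * V : ℝ) ≠ 0), ENNReal.ofReal_one]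
          _ = ∫⁻ _ in Q', ENNReal.ofReal ((4⁻¹ * V)⁻¹) ∂volume := (setLIntegral_const _ _).symm
          _ ≤ ∫⁻ y in Q', ENNReal.ofReal ((1 / θ) ^ q y) ∂volume :=
              setLIntegral_mono' hQ'meas hpt
          _ ≤ _ := lintegral_mono_set hsub
      exact lux_bounds q qm hqm0 hqb _ hQmeas θ θ' hθ0 hθ'0 h1 h2
end

section
/- If q is locally log-Hölder continuous with q₊ < ∞, then there is a constant C such that |Q|^{q₋(Q) - q(x)} ≤ C for every cube Q and every x ∈ Q. -/
open MeasureTheory ENNReal Set Filter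

lemma cube_volume {n : ℕ} (c : Fin n → ℝ) (r : ℝ) :
    volume (Set.univ.pi fun i => Set.Icc (c i) (c i + r)) = ENNReal.ofReal r ^ n := by
  rw [volume_pi_pi]; simp [Real.volume_Icc]

lemma cube_measurable {n : ℕ} (c : Fin n → ℝ) (r : ℝ) :
    MeasurableSet (Set.univ.pi fun i => Set.Icc (c i) (c i + r)) :=
  MeasurableSet.univ_pi fun i => measurableSet_Icc

lemma cube_vol_ne_zero {n : ℕ} (c : Fin n → ℝ) (r : ℝ) (hr : 0 < r) :
    volume (Set.univ.pi fun i => Set.Icc (c i) (c i + r)) ≠ 0 := by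
  rw [cube_volume]
  simp [pow_eq_zero_iff, ENNReal.ofReal_eq_zero, not_le, hr]

/-- a point realizing (almost) the essential infimum on a positive-measure measurable set -/
lemma exists_essInf_le {n : ℕ} (Q : Set (Fin n → ℝ))
    (q : (Fin n → ℝ) → ℝ) (h1 : ∀ x, 1 ≤ q x) (hne : volume Q ≠ 0)
    (hQ : MeasurableSet Q) :
    ∃ y ∈ Q, essInf q (volume.restrict Q) ≤ q y := by
  have hne' : volume.restrict Q ≠ 0 := by simpa [Measure.restrict_eq_zero] using hne
  have : Filter.NeBot (ae (volume.restrict Q)) := ae_neBot.mpr hne'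
  have h := (ae_restrict_mem (μ := volume) hQ).and
    (ae_essInf_le (f := q) (isBoundedUnder_of ⟨1, fun x => h1 x⟩))
  obtain ⟨y, hy1, hy2⟩ := h.exists
  exact ⟨y, hy1, hy2⟩

lemma one_le_essInf {n : ℕ} (Q : Set (Fin n → ℝ)) (B : ℝ)
    (q : (Fin n → ℝ) → ℝ) (h1 : ∀ x, 1 ≤ q x) (hB : ∀ x, q x ≤ B) (hne : volume Q ≠ 0) :
    1 ≤ essInf q (volume.restrict Q) := by
  have hne' : volume.restrict Q ≠ 0 := by simpa [Measure.restrict_eq_zero] using hne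
  have : Filter.NeBot (ae (volume.restrict Q)) := ae_neBot.mpr hne'
  exact le_liminf_of_le (isCoboundedUnder_ge_of_le _ hB) (Eventually.of_forall h1)

lemma essInf_subset_le {n : ℕ} (Q Q' : Set (Fin n → ℝ)) (hsub : Q' ⊆ Q) (B : ℝ)
    (q : (Fin n → ℝ) → ℝ) (h1 : ∀ x, 1 ≤ q x) (hB : ∀ x, q x ≤ B) (hne : volume Q' ≠ 0) :
    essInf q (volume.restrict Q) ≤ essInf q (volume.restrict Q') := by
  have hne' : volume.restrict Q' ≠ 0 := by simpa [Measure.restrict_eq_zero] using hne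
  have : Filter.NeBot (ae (volume.restrict Q')) := ae_neBot.mpr hne'
  exact liminf_le_liminf_of_le (ae_mono (Measure.restrict_mono hsub le_rfl))
    (isBoundedUnder_of ⟨1, fun x => h1 x⟩) (isCoboundedUnder_ge_of_le _ hB)

/-- Key upper bound on the essential infimum via log-Hölder continuity. -/
lemma essInf_le_q_add {n : ℕ} (q : (Fin n → ℝ) → ℝ) (B : ℝ)
    (hbound : ∀ x, 1 ≤ q x ∧ q x ≤ B) (C₀ : ℝ) (hC₀ : 0 < C₀)
    (hlog : ∀ x y : Fin n → ℝ, dist x y ≤ 1/2 →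
      |q x - q y| ≤ C₀ / (-Real.log (dist x y)))
    (c : Fin n → ℝ) (r : ℝ) (hr : 0 < r) (x : Fin n → ℝ)
    (hx : x ∈ Set.univ.pi fun i => Set.Icc (c i) (c i + r))
    (t : ℝ) (ht0 : 0 < t) (htr : t ≤ r) (ht2 : t ≤ 1/2) :
    essInf q (volume.restrict (Set.univ.pi fun i => Set.Icc (c i) (c i + r)))
      ≤ q x + C₀ / (-Real.log t) := by
  have h1 : ∀ z, 1 ≤ q z := fun z => (hbound z).1
  have hB : ∀ z, q z ≤ B := fun z => (hbound z).2
  have hxi : ∀ i, c i ≤ x i ∧ x i ≤ c i + r := fun i => by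
    have := Set.mem_univ_pi.mp hx i; exact ⟨this.1, this.2⟩
  set c' : Fin n → ℝ := fun i => min (x i) (c i + r - t) with hc'
  set Q' : Set (Fin n → ℝ) := Set.univ.pi fun i => Set.Icc (c' i) (c' i + t) with hQ'
  have hxQ' : x ∈ Q' := by
    rw [hQ', Set.mem_univ_pi]
    intro i
    refine ⟨min_le_left _ _, ?_⟩
    have : x i - t ≤ c' i := le_min (by linarith) (by linarith [(hxi i).2])
    linarith
  have hsub : Q' ⊆ Set.univ.pi fun i => Set.Icc (c i) (c i + r) := by
    intro y hy
    rw [Set.mem_univ_pi]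
    intro i
    have hyi := Set.mem_univ_pi.mp hy i
    have h1' : c i ≤ c' i := le_min (hxi i).1 (by linarith)
    have h2' : c' i ≤ c i + r - t := min_le_right _ _
    exact ⟨le_trans h1' hyi.1, by linarith [hyi.2]⟩
  have hne' : volume Q' ≠ 0 := cube_vol_ne_zero c' t ht0
  have hmono := essInf_subset_le _ Q' hsub B q h1 hB hne'
  obtain ⟨y, hyQ', hyI⟩ := exists_essInf_le Q' q h1 hne' (cube_measurable c' t)
  have hdist : dist x y ≤ t := by
    rw [dist_pi_le_iff ht0.le]
    intro i
    have hxi' := Set.mem_univ_pi.mp hxQ' i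
    have hyi' := Set.mem_univ_pi.mp hyQ' i
    rw [Real.dist_eq, abs_le]
    constructor <;> [linarith [hxi'.1, hyi'.2]; linarith [hxi'.2, hyi'.1]]
  have hlogt : 0 < -Real.log t := by
    have : Real.log t < 0 := Real.log_neg ht0 (lt_of_le_of_lt ht2 (by norm_num))
    linarith
  have hdiv : C₀ / (-Real.log (dist x y)) ≤ C₀ / (-Real.log t) := by
    rcases eq_or_lt_of_le (dist_nonneg (x := x) (y := y)) with hd | hd
    · rw [← hd]
      simp only [Real.log_zero, neg_zero, _root_.div_zero]
      exact div_nonneg hC₀.le (by linarith)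
    · have hlt : Real.log (dist x y) ≤ Real.log t := Real.log_le_log hd hdist
      gcongr
  have habs := hlog x y (le_trans hdist ht2)
  have : q y ≤ q x + C₀ / (-Real.log (dist x y)) := by
    have := neg_abs_le (q x - q y)
    linarith [habs]
  calc essInf q (volume.restrict (Set.univ.pi fun i => Set.Icc (c i) (c i + r)))
      ≤ essInf q (volume.restrict Q') := hmono
    _ ≤ q y := hyI
    _ ≤ q x + C₀ / (-Real.log (dist x y)) := this
    _ ≤ q x + C₀ / (-Real.log t) := by linarith [hdiv]

/-- Reverse bound: `q x` is not much more than the essential infimum for small cubes. -/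
lemma q_le_essInf_add {n : ℕ} (q : (Fin n → ℝ) → ℝ) (B : ℝ)
    (hbound : ∀ x, 1 ≤ q x ∧ q x ≤ B) (C₀ : ℝ) (hC₀ : 0 < C₀)
    (hlog : ∀ x y : Fin n → ℝ, dist x y ≤ 1/2 →
      |q x - q y| ≤ C₀ / (-Real.log (dist x y)))
    (c : Fin n → ℝ) (r : ℝ) (hr : 0 < r) (hr2 : r ≤ 1/2) (x : Fin n → ℝ)
    (hx : x ∈ Set.univ.pi fun i => Set.Icc (c i) (c i + r)) :
    q x ≤ essInf q (volume.restrict (Set.univ.pi fun i => Set.Icc (c i) (c i + r)))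
      + C₀ / (-Real.log r) := by
  have h1 : ∀ z, 1 ≤ q z := fun z => (hbound z).1
  have hB : ∀ z, q z ≤ B := fun z => (hbound z).2
  set Q : Set (Fin n → ℝ) := Set.univ.pi fun i => Set.Icc (c i) (c i + r) with hQdef
  set I : ℝ := essInf q (volume.restrict Q) with hI
  have hne : volume Q ≠ 0 := cube_vol_ne_zero c r hr
  have hne' : volume.restrict Q ≠ 0 := by simpa [Measure.restrict_eq_zero] using hne
  have hnb : Filter.NeBot (ae (volume.restrict Q)) := ae_neBot.mpr hne'
  have hlogr : 0 < -Real.log r := by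
    have : Real.log r < 0 := Real.log_neg hr (lt_of_le_of_lt hr2 (by norm_num))
    linarith
  -- it suffices to show the bound up to any ε > 0
  have key : ∀ ε : ℝ, 0 < ε → q x ≤ I + C₀ / (-Real.log r) + ε := by
    intro ε hε
    -- there is a point of Q with q y < I + ε
    have hy : ∃ y ∈ Q, q y < I + ε := by
      by_contra h
      push_neg at h
      have : I + ε ≤ I := by
        rw [hI]
        exact le_liminf_of_le (isCoboundedUnder_ge_of_le _ hB)
          ((ae_restrict_mem (μ := volume) (cube_measurable c r)).mono fun y hy => h y hy)
      linarith
    obtain ⟨y, hyQ, hylt⟩ := hy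
    have hdist : dist x y ≤ r := by
      rw [dist_pi_le_iff hr.le]
      intro i
      have hxi' := Set.mem_univ_pi.mp hx i
      have hyi' := Set.mem_univ_pi.mp hyQ i
      rw [Real.dist_eq, abs_le]
      constructor <;> [linarith [hxi'.1, hyi'.2]; linarith [hxi'.2, hyi'.1]]
    have hdiv : C₀ / (-Real.log (dist x y)) ≤ C₀ / (-Real.log r) := by
      rcases eq_or_lt_of_le (dist_nonneg (x := x) (y := y)) with hd | hd
      · rw [← hd]
        simp only [Real.log_zero, neg_zero, _root_.div_zero]
        exact div_nonneg hC₀.le (by linarith)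
      · have hlt : Real.log (dist x y) ≤ Real.log r := Real.log_le_log hd hdist
        gcongr
    have habs := hlog x y (le_trans hdist hr2)
    have : q x ≤ q y + C₀ / (-Real.log (dist x y)) := by
      have := le_abs_self (q x - q y)
      linarith [habs]
    linarith [hdiv]
  have := le_of_forall_pos_le_add (a := q x) (b := I + C₀ / (-Real.log r))
    (fun ε hε => key ε hε)
  linarith [this]

/-- The essential infimum over a cube never exceeds the value at a point of the cube. -/
lemma essInf_le_q {n : ℕ} (q : (Fin n → ℝ) → ℝ) (B : ℝ)
    (hbound : ∀ x, 1 ≤ q x ∧ q x ≤ B) (C₀ : ℝ) (hC₀ : 0 < C₀)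
    (hlog : ∀ x y : Fin n → ℝ, dist x y ≤ 1/2 →
      |q x - q y| ≤ C₀ / (-Real.log (dist x y)))
    (c : Fin n → ℝ) (r : ℝ) (hr : 0 < r) (x : Fin n → ℝ)
    (hx : x ∈ Set.univ.pi fun i => Set.Icc (c i) (c i + r)) :
    essInf q (volume.restrict (Set.univ.pi fun i => Set.Icc (c i) (c i + r))) ≤ q x := by
  refine le_of_forall_pos_le_add ?_
  intro ε hε
  set t : ℝ := min r (min (1/2) (Real.exp (-(C₀/ε)))) with htdef
  have ht0 : 0 < t := lt_min hr (lt_min (by norm_num) (Real.exp_pos _))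
  have htr : t ≤ r := min_le_left _ _
  have ht2 : t ≤ 1/2 := le_trans (min_le_right _ _) (min_le_left _ _)
  have hte : t ≤ Real.exp (-(C₀/ε)) := le_trans (min_le_right _ _) (min_le_right _ _)
  have hbd := essInf_le_q_add q B hbound C₀ hC₀ hlog c r hr x hx t ht0 htr ht2
  have hlt : Real.log t ≤ -(C₀/ε) := by
    calc Real.log t ≤ Real.log (Real.exp (-(C₀/ε))) := Real.log_le_log ht0 hte
      _ = -(C₀/ε) := Real.log_exp _
  have hpos : 0 < C₀ / ε := div_pos hC₀ hε
  have hdiv : C₀ / (-Real.log t) ≤ ε := by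
    have h1 : C₀ / ε ≤ -Real.log t := by linarith
    have h2 : C₀ / (-Real.log t) ≤ C₀ / (C₀ / ε) := by gcongr
    have h3 : C₀ / (C₀ / ε) = ε := by field_simp
    linarith
  linarith [hbd, hdiv]

/-- if `q : ℝⁿ → [1,∞)` is bounded and locally log-Hölder continuous,
then there is `C` with `|Q|^{q₋(Q) − q(x)} ≤ C` for every cube `Q` and every `x ∈ Q`. -/
theorem cube_rpow_essInf_sub_le {n : ℕ} (q : (Fin n → ℝ) → ℝ)
    (hmeas : Measurable q) (B : ℝ) (hbound : ∀ x, 1 ≤ q x ∧ q x ≤ B)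
    (C₀ : ℝ) (hC₀ : 0 < C₀)
    (hlog : ∀ x y : Fin n → ℝ, dist x y ≤ 1/2 →
      |q x - q y| ≤ C₀ / (-Real.log (dist x y))) :
    ∃ C : ℝ, 0 < C ∧ ∀ Q : Set (Fin n → ℝ), IsCube Q → ∀ x ∈ Q,
      (volume Q).toReal ^
        (essInf q ((volume : Measure (Fin n → ℝ)).restrict Q) - q x) ≤ C := by
  have h1 : ∀ z, 1 ≤ q z := fun z => (hbound z).1
  have hB : ∀ z, q z ≤ B := fun z => (hbound z).2
  have hB1 : 1 ≤ B := le_trans (h1 0) (hB 0)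
  set C : ℝ := max (max 1 (Real.exp ((B - 1) * ((n : ℝ) * Real.log 2)))) (Real.exp (C₀ * n))
    with hCdef
  have hC1 : (1 : ℝ) ≤ C := le_trans (le_max_left _ _) (le_max_left _ _)
  refine ⟨C, lt_of_lt_of_le one_pos hC1, ?_⟩
  rintro Q ⟨c, r, hr, rfl⟩ x hx
  set I : ℝ := essInf q (volume.restrict (Set.univ.pi fun i => Set.Icc (c i) (c i + r)))
    with hIdef
  have hne : volume (Set.univ.pi fun i => Set.Icc (c i) (c i + r)) ≠ 0 :=
    cube_vol_ne_zero c r hr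
  have hI1 : 1 ≤ I := one_le_essInf _ B q h1 hB hne
  have hIle : I ≤ q x := essInf_le_q q B hbound C₀ hC₀ hlog c r hr x hx
  have hqxB : q x ≤ B := hB x
  have htoReal : (volume (Set.univ.pi fun i => Set.Icc (c i) (c i + r))).toReal = r ^ n := by
    rw [cube_volume]
    rw [ENNReal.toReal_pow, ENNReal.toReal_ofReal hr.le]
  have hrn : (0 : ℝ) < r ^ n := by positivity
  rw [htoReal, Real.rpow_def_of_pos hrn, Real.log_pow]
  rcases le_or_gt 1 r with hr1 | hr1
  · -- big cube : exponent is nonpositive, base log nonneg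
    have hlogr : 0 ≤ Real.log r := Real.log_nonneg hr1
    have : (n : ℝ) * Real.log r * (I - q x) ≤ 0 :=
      mul_nonpos_iff.mpr (Or.inl ⟨by positivity, by linarith⟩)
    calc Real.exp ((n : ℝ) * Real.log r * (I - q x)) ≤ 1 := Real.exp_le_one_iff.mpr this
      _ ≤ C := hC1
  · rcases le_or_gt (1/2 : ℝ) r with hr2 | hr2
    · -- medium cube
      have hlogr1 : Real.log r ≤ 0 := (Real.log_neg hr hr1).le
      have hlogr2 : -Real.log 2 ≤ Real.log r := by
        have : Real.log (1/2) ≤ Real.log r := Real.log_le_log (by norm_num) hr2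
        simpa [Real.log_div, Real.log_one] using this
      have hn0 : (0 : ℝ) ≤ (n : ℝ) := Nat.cast_nonneg n
      have key : ((n : ℝ) * (-Real.log r)) * (q x - I) ≤ ((n : ℝ) * Real.log 2) * (B - 1) :=
        mul_le_mul (by nlinarith) (by linarith) (by linarith) (by positivity)
      have heq : (n : ℝ) * Real.log r * (I - q x) = ((n : ℝ) * (-Real.log r)) * (q x - I) := by
        ring
      rw [heq]
      calc Real.exp (((n : ℝ) * (-Real.log r)) * (q x - I))
          ≤ Real.exp ((B - 1) * ((n : ℝ) * Real.log 2)) := by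
            apply Real.exp_le_exp.mpr; nlinarith
        _ ≤ C := le_trans (le_max_right _ _) (le_max_left _ _)
    · -- small cube : use log-Hölder
      have hlogr : 0 < -Real.log r := by
        have : Real.log r < 0 := Real.log_neg hr (by linarith)
        linarith
      have hqb : q x - I ≤ C₀ / (-Real.log r) := by
        have := q_le_essInf_add q B hbound C₀ hC₀ hlog c r hr hr2.le x hx
        linarith
      have heq : (n : ℝ) * Real.log r * (I - q x) = ((n : ℝ) * (-Real.log r)) * (q x - I) := by
        ring
      rw [heq]
      have key : ((n : ℝ) * (-Real.log r)) * (q x - I) ≤ C₀ * n := by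
        have h1' : ((n : ℝ) * (-Real.log r)) * (q x - I)
            ≤ ((n : ℝ) * (-Real.log r)) * (C₀ / (-Real.log r)) :=
          mul_le_mul_of_nonneg_left hqb (by positivity)
        have hlogne : Real.log r ≠ 0 := by linarith
        have h2' : ((n : ℝ) * (-Real.log r)) * (C₀ / (-Real.log r)) = C₀ * n := by
          field_simp
        linarith
      calc Real.exp (((n : ℝ) * (-Real.log r)) * (q x - I))
          ≤ Real.exp (C₀ * n) := Real.exp_le_exp.mpr key
        _ ≤ C := le_max_right _ _
end
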